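/- Assume (A1), (A2) and (A3). Let ω ∈ G_n ∩ Ψ^n, τ ∈ G_m ∩ Ψ^m and υ ∈ G_l ∩ Ψ^l be such that the concatenations ω∗τ and ω∗υ∗τ belong to 𝒮*. Then ℰ_r(ω∗υ∗τ) ≤ (l+1)·(p̄·s̄^r)^{l+1}·(p̲·s̲^r)^{−1}·ℰ_r(ω∗τ), where p̲ = min_{(i,j)∈G₂}p_{i,j}, p̄ = max_{(i,j)∈G₂}p_{i,j}, s̲ = min_{(i,j)∈𝒮₂}s_{i,j}, s̄ = max_{(i,j)∈𝒮₂}s_{i,j}. -/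

import Mathlib

open scoped Classical ENNReal
open Filter MeasureTheory

noncomputable section

namespace MTM

/-- the edge relation of the directed graph `𝒢`: `(i,j) ∈ G₂ ↔ p i j > 0`. -/
def edge (p : ℕ → ℕ → ℝ) (i j : ℕ) : Prop := 0 < p i j

/-- product of transition weights along a word. -/
def pword (p : ℕ → ℕ → ℝ) : List ℕ → ℝ
  | [] => 1
  | [_] => 1
  | a :: b :: t => p a b * pword p (b :: t)

/-- product of contraction ratios along a word. -/
def sword (sr : ℕ → ℕ → ℝ) : List ℕ → ℝ
  | [] => 1
  | [_] => 1
  | a :: b :: t => sr a b * sword sr (b :: t)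

/-- `𝒯(σ)`: all lifts of a word, each letter `i` may be replaced by `i + N`. -/
def lifts (N : ℕ) : List ℕ → Finset (List ℕ)
  | [] => {[]}
  | i :: t => (lifts N t).biUnion fun l => {i :: l, (i + N) :: l}

/-- `Γ(σ) = G_n ∩ 𝒯(σ)`. -/
def Gam (p : ℕ → ℕ → ℝ) (N : ℕ) (σ : List ℕ) : Finset (List ℕ) :=
  (lifts N σ).filter fun τ => τ.Chain' (edge p)

/-- words over the alphabet `Ψ = {1,…,N}`. -/
def isPsiWord (N : ℕ) (σ : List ℕ) : Prop :=
  σ ≠ [] ∧ ∀ x ∈ σ, x ∈ Finset.Icc 1 N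

/-- `σ ∈ 𝒮_*`: a `Ψ`-word having at least one admissible lift. -/
def isSword (p : ℕ → ℕ → ℝ) (N : ℕ) (σ : List ℕ) : Prop :=
  isPsiWord N σ ∧ (Gam p N σ).Nonempty

/-- `σ ∈ G_*`: admissible words over `Ω = {1,…,2N}`. -/
def isGword (p : ℕ → ℕ → ℝ) (N : ℕ) (σ : List ℕ) : Prop :=
  σ ≠ [] ∧ (∀ x ∈ σ, x ∈ Finset.Icc 1 (2 * N)) ∧ σ.Chain' (edge p)

/-- `σ ∈ H₁^*`: admissible words with all letters in `Ψ`. -/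
def isH1word (p : ℕ → ℕ → ℝ) (N : ℕ) (σ : List ℕ) : Prop :=
  σ ≠ [] ∧ (∀ x ∈ σ, x ∈ Finset.Icc 1 N) ∧ σ.Chain' (edge p)

/-- `σ ∈ H₂^*`: admissible words with all letters in `Υ = {N+1,…,2N}`. -/
def isH2word (p : ℕ → ℕ → ℝ) (N : ℕ) (σ : List ℕ) : Prop :=
  σ ≠ [] ∧ (∀ x ∈ σ, x ∈ Finset.Icc (N + 1) (2 * N)) ∧ σ.Chain' (edge p)

/-- `μ(J_σ) = Σ_{σ̃ ∈ Γ(σ)} χ_{σ̃₁} p_{σ̃}`. -/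
def muJ (p : ℕ → ℕ → ℝ) (χ : ℕ → ℝ) (N : ℕ) (σ : List ℕ) : ℝ :=
  ∑ τ ∈ Gam p N σ, χ (τ.headD 0) * pword p τ

/-- `ℰ_r(σ) = μ(J_σ) s_σ^r`, with `ℰ_r(θ) = 1` for the empty word. -/
def Er (p : ℕ → ℕ → ℝ) (χ : ℕ → ℝ) (sr : ℕ → ℕ → ℝ) (N : ℕ) (r : ℝ) (σ : List ℕ) : ℝ :=
  if σ = [] then 1 else muJ p χ N σ * sword sr σ ^ r

/-- `I_{1,σ}` resp. `I_{2,σ}`: the part of `μ(J_σ)` coming from lifts ending with `i`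
(resp. with `i⁺`, when applied with `i + N`). -/
def Ipart (p : ℕ → ℕ → ℝ) (χ : ℕ → ℝ) (N : ℕ) (i : ℕ) (σ : List ℕ) : ℝ :=
  ∑ τ ∈ (Gam p N σ).filter (fun τ => τ.getLastD 0 = i), χ (τ.headD 0) * pword p τ

/-- all words of a given length over a finite alphabet. -/
def wordsOfLen (S : Finset ℕ) : ℕ → Finset (List ℕ)
  | 0 => {[]}
  | n + 1 => (wordsOfLen S n).biUnion fun l => S.image fun a => a :: l

/-- `𝒮_n` as a finite set of words. -/
def Sn (p : ℕ → ℕ → ℝ) (N n : ℕ) : Finset (List ℕ) :=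
  (wordsOfLen (Finset.Icc 1 N) n).filter (isSword p N)

/-- irreducibility of the sub-matrix of `p` indexed by `S`: the corresponding directed
graph is strongly connected. -/
def irreducibleOn (p : ℕ → ℕ → ℝ) (S : Finset ℕ) : Prop :=
  ∀ i ∈ S, ∀ j ∈ S, ∃ c : List ℕ, (∀ x ∈ c, x ∈ S) ∧ List.Chain (edge p) i (c ++ [j])

/-- Assumption (A1): `P₁, P₂` irreducible and `P₄ = 0`. -/
def A1 (p : ℕ → ℕ → ℝ) (N : ℕ) : Prop :=
  irreducibleOn p (Finset.Icc 1 N) ∧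
    irreducibleOn (fun a b => p (a + N) (b + N)) (Finset.Icc 1 N) ∧
    ∀ i ∈ Finset.Icc 1 N, ∀ j ∈ Finset.Icc 1 N, p (i + N) j = 0

/-- Assumption (A2). -/
def A2 (p : ℕ → ℕ → ℝ) (N : ℕ) : Prop :=
  ∀ i ∈ Finset.Icc 1 N,
    2 ≤ ((Finset.Icc 1 N).filter fun j => 0 < p i j).card ∧
      2 ≤ ((Finset.Icc 1 N).filter fun j => 0 < p (i + N) (j + N)).card

/-- Assumption (A3): `ℳ_{i,j} = ∅` or `ℳ_{i,j} = {(i,j),(i,j⁺),(i⁺,j⁺)}`. -/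
def A3 (p : ℕ → ℕ → ℝ) (N : ℕ) : Prop :=
  ∀ i ∈ Finset.Icc 1 N, ∀ j ∈ Finset.Icc 1 N,
    (p i j = 0 ∧ p i (j + N) = 0 ∧ p (i + N) j = 0 ∧ p (i + N) (j + N) = 0) ∨
      (0 < p i j ∧ 0 < p i (j + N) ∧ p (i + N) j = 0 ∧ 0 < p (i + N) (j + N))

/-- Assumption (A4): `ℳ_{i,j} = ∅` or `ℳ_{i,j} = 𝒩_{i,j}`. -/
def A4 (p : ℕ → ℕ → ℝ) (N : ℕ) : Prop :=
  ∀ i ∈ Finset.Icc 1 N, ∀ j ∈ Finset.Icc 1 N,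
    (p i j = 0 ∧ p i (j + N) = 0 ∧ p (i + N) j = 0 ∧ p (i + N) (j + N) = 0) ∨
      (0 < p i j ∧ 0 < p i (j + N) ∧ 0 < p (i + N) j ∧ 0 < p (i + N) (j + N))

/-- Assumption (A5): `P₁` is irreducible. -/
def A5 (p : ℕ → ℕ → ℝ) (N : ℕ) : Prop := irreducibleOn p (Finset.Icc 1 N)

/-- `T_σ = T_{σ₁σ₂} ∘ ⋯ ∘ T_{σ_{n-1}σ_n}` (identity for words of length `≤ 1`). -/
def Tword {E : Type*} (T : ℕ → ℕ → E → E) : List ℕ → E → E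
  | [], x => x
  | [_], x => x
  | a :: b :: t, x => T a b (Tword T (b :: t) x)

/-- the cylinder set `J_σ = T_σ (J_{σ_n})`. -/
def Jword {E : Type*} (T : ℕ → ℕ → E → E) (J : ℕ → Set E) (σ : List ℕ) : Set E :=
  Tword T σ '' J (σ.getLastD 0)

/-- the Mauldin–Williams fractal `K = ⋂_k ⋃_{σ ∈ G_k} J_σ`. -/
def attractor {E : Type*} (p : ℕ → ℕ → ℝ) (N : ℕ) (T : ℕ → ℕ → E → E) (J : ℕ → Set E) :
    Set E :=
  ⋂ n : ℕ, ⋃ σ ∈ {σ : List ℕ | isGword p N σ ∧ σ.length = n + 1}, Jword T J σ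

/-- `μ` is reducible: `μ = ν₁ ∘ π₁⁻¹` for the Markov-type measure `ν₁` associated with some
`N × N` row-stochastic matrix and positive probability vector; equivalently, the cylinder
values of `μ` are of Markov type. -/
def reducible {E : Type*} [MeasurableSpace E] (p : ℕ → ℕ → ℝ) (N : ℕ)
    (T : ℕ → ℕ → E → E) (J : ℕ → Set E) (μ : Measure E) : Prop :=
  ∃ (pt : ℕ → ℕ → ℝ) (χt : ℕ → ℝ),
    (∀ i ∈ Finset.Icc 1 N, ∀ j ∈ Finset.Icc 1 N, 0 ≤ pt i j) ∧
      (∀ i ∈ Finset.Icc 1 N, ∑ j ∈ Finset.Icc 1 N, pt i j = 1) ∧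
      (∀ i ∈ Finset.Icc 1 N, 0 < χt i) ∧
      (∑ i ∈ Finset.Icc 1 N, χt i = 1) ∧
      ∀ σ : List ℕ, isSword p N σ →
        μ (Jword T J σ) = ENNReal.ofReal (χt (σ.headD 0) * pword pt σ)

/-- `e^r_{k,r}(μ)`: the `k`-th quantization error of order `r`, to the `r`-th power. -/
def quantErr {E : Type*} [PseudoMetricSpace E] [MeasurableSpace E] (r : ℝ) (μ : Measure E)
    (k : ℕ) : ℝ :=
  sInf ((fun α : Set E => ∫ x, Metric.infDist x α ^ r ∂μ) ''
    {α : Set E | α.Nonempty ∧ α.Finite ∧ α.ncard ≤ k})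

/-- the upper quantization coefficient `Q̄_r^s(μ) = limsup_k k^{r/s} e^r_{k,r}(μ)`. -/
def upperQC {E : Type*} [PseudoMetricSpace E] [MeasurableSpace E] (r s : ℝ)
    (μ : Measure E) : ℝ≥0∞ :=
  limsup (fun k : ℕ => ENNReal.ofReal ((k : ℝ) ^ (r / s) * quantErr r μ k)) atTop

/-- the lower quantization coefficient `Q̲_r^s(μ)`. -/
def lowerQC {E : Type*} [PseudoMetricSpace E] [MeasurableSpace E] (r s : ℝ)
    (μ : Measure E) : ℝ≥0∞ :=
  liminf (fun k : ℕ => ENNReal.ofReal ((k : ℝ) ^ (r / s) * quantErr r μ k)) atTop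

/-- the upper quantization dimension `D̄_r(μ) = limsup_k log k / (-log e_{k,r}(μ))`. -/
def upperQD {E : Type*} [PseudoMetricSpace E] [MeasurableSpace E] (r : ℝ)
    (μ : Measure E) : ℝ :=
  limsup (fun k : ℕ => Real.log k / (-Real.log (quantErr r μ k ^ (1 / r)))) atTop

/-- the lower quantization dimension `D̲_r(μ)`. -/
def lowerQD {E : Type*} [PseudoMetricSpace E] [MeasurableSpace E] (r : ℝ)
    (μ : Measure E) : ℝ :=
  liminf (fun k : ℕ => Real.log k / (-Real.log (quantErr r μ k ^ (1 / r)))) atTop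

/-- spectral radius of a real matrix: the largest modulus of a complex eigenvalue. -/
def specRad {n : Type*} [Fintype n] [DecidableEq n] (M : Matrix n n ℝ) : ℝ :=
  sSup (norm '' spectrum ℂ (M.map (algebraMap ℝ ℂ)))

/-- `A₁(s) = ((p_{i,j} s_{i,j}^r)^s)_{i,j=1}^N`. -/
def matA1 (p sr : ℕ → ℕ → ℝ) (N : ℕ) (r s : ℝ) : Matrix (Fin N) (Fin N) ℝ :=
  Matrix.of fun i j => (p (i.1 + 1) (j.1 + 1) * sr (i.1 + 1) (j.1 + 1) ^ r) ^ s

/-- `A₂(s) = ((p_{i⁺,j⁺} s_{i⁺,j⁺}^r)^s)_{i,j=1}^N`. -/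
def matA2 (p sr : ℕ → ℕ → ℝ) (N : ℕ) (r s : ℝ) : Matrix (Fin N) (Fin N) ℝ :=
  Matrix.of fun i j => (p (i.1 + 1 + N) (j.1 + 1 + N) * sr (i.1 + 1 + N) (j.1 + 1 + N) ^ r) ^ s

/-- `A₃(s) = ((p_{i,j⁺} s_{i,j⁺}^r)^s)_{i,j=1}^N`. -/
def matA3 (p sr : ℕ → ℕ → ℝ) (N : ℕ) (r s : ℝ) : Matrix (Fin N) (Fin N) ℝ :=
  Matrix.of fun i j => (p (i.1 + 1) (j.1 + 1 + N) * sr (i.1 + 1) (j.1 + 1 + N) ^ r) ^ s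

/-- `A₄(s) = ((p_{i⁺,j} s_{i⁺,j}^r)^s)_{i,j=1}^N`. -/
def matA4 (p sr : ℕ → ℕ → ℝ) (N : ℕ) (r s : ℝ) : Matrix (Fin N) (Fin N) ℝ :=
  Matrix.of fun i j => (p (i.1 + 1 + N) (j.1 + 1) * sr (i.1 + 1 + N) (j.1 + 1) ^ r) ^ s

/-- the block matrix `A(s) = [[A₁(s), A₃(s)], [A₄(s), A₂(s)]]`. -/
def matA (p sr : ℕ → ℕ → ℝ) (N : ℕ) (r s : ℝ) :
    Matrix (Fin N ⊕ Fin N) (Fin N ⊕ Fin N) ℝ :=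
  Matrix.fromBlocks (matA1 p sr N r s) (matA3 p sr N r s) (matA4 p sr N r s) (matA2 p sr N r s)

/-- `p̲ = min_{(i,j) ∈ G₂} p_{i,j}`. -/
def pMin (p : ℕ → ℕ → ℝ) (N : ℕ) : ℝ :=
  sInf {x | ∃ i ∈ Finset.Icc 1 (2 * N), ∃ j ∈ Finset.Icc 1 (2 * N), 0 < p i j ∧ x = p i j}

/-- `p̄ = max_{(i,j) ∈ G₂} p_{i,j}`. -/
def pMax (p : ℕ → ℕ → ℝ) (N : ℕ) : ℝ :=
  sSup {x | ∃ i ∈ Finset.Icc 1 (2 * N), ∃ j ∈ Finset.Icc 1 (2 * N), 0 < p i j ∧ x = p i j}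

/-- `s̲ = min_{(i,j) ∈ 𝒮₂} s_{i,j}`. -/
def sMin (p sr : ℕ → ℕ → ℝ) (N : ℕ) : ℝ :=
  sInf {x | ∃ i ∈ Finset.Icc 1 N, ∃ j ∈ Finset.Icc 1 N, isSword p N [i, j] ∧ x = sr i j}

/-- `s̄ = max_{(i,j) ∈ 𝒮₂} s_{i,j}`. -/
def sMax (p sr : ℕ → ℕ → ℝ) (N : ℕ) : ℝ :=
  sSup {x | ∃ i ∈ Finset.Icc 1 N, ∃ j ∈ Finset.Icc 1 N, isSword p N [i, j] ∧ x = sr i j}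

/-- `χ̲ = min_{1 ≤ i ≤ 2N} χ_i`. -/
def chiMin (χ : ℕ → ℝ) (N : ℕ) : ℝ := sInf {x | ∃ i ∈ Finset.Icc 1 (2 * N), x = χ i}

/-- `χ̄ = max_{1 ≤ i ≤ 2N} χ_i`. -/
def chiMax (χ : ℕ → ℝ) (N : ℕ) : ℝ := sSup {x | ∃ i ∈ Finset.Icc 1 (2 * N), x = χ i}

/-- `t` satisfies the defining property of `t_r`:
`(1/n) log Σ_{σ ∈ 𝒮_n} ℰ_r(σ)^{t/(t+r)} → 0`. -/
def trCond (p : ℕ → ℕ → ℝ) (χ : ℕ → ℝ) (sr : ℕ → ℕ → ℝ) (N : ℕ) (r t : ℝ) : Prop :=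
  0 < t ∧
    Tendsto (fun n : ℕ => (n : ℝ)⁻¹ *
      Real.log (∑ σ ∈ Sn p N n, Er p χ sr N r σ ^ (t / (t + r)))) atTop (nhds 0)

/-- the initial word of length `n` of an infinite sequence. -/
def seqTake (x : ℕ → ℕ) (n : ℕ) : List ℕ := (List.range n).map x

/-- `Γ` is a finite maximal antichain among the words satisfying `W`, with respect to the
infinite sequences satisfying `Wseq`. -/
def isMaxAntichain (W : List ℕ → Prop) (Wseq : (ℕ → ℕ) → Prop) (Γ : Finset (List ℕ)) : Prop :=
  (∀ σ ∈ Γ, W σ) ∧ (∀ σ ∈ Γ, ∀ τ ∈ Γ, σ ≠ τ → ¬σ <+: τ) ∧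
    ∀ x : ℕ → ℕ, Wseq x → ∃ n : ℕ, 1 ≤ n ∧ seqTake x n ∈ Γ

/-- infinite admissible sequences with letters in `Ψ`. -/
def isH1seq (p : ℕ → ℕ → ℝ) (N : ℕ) (x : ℕ → ℕ) : Prop :=
  (∀ n, x n ∈ Finset.Icc 1 N) ∧ ∀ n, 0 < p (x n) (x (n + 1))

/-- infinite admissible sequences with letters in `Υ`. -/
def isH2seq (p : ℕ → ℕ → ℝ) (N : ℕ) (x : ℕ → ℕ) : Prop :=
  (∀ n, x n ∈ Finset.Icc (N + 1) (2 * N)) ∧ ∀ n, 0 < p (x n) (x (n + 1))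

/-- minimal length of a word in `Γ`. -/
def minLen (Γ : Finset (List ℕ)) : ℕ := sInf {n | ∃ σ ∈ Γ, σ.length = n}

/-- maximal length of a word in `Γ`. -/
def maxLen (Γ : Finset (List ℕ)) : ℕ := sSup {n | ∃ σ ∈ Γ, σ.length = n}

/-- `Λ_{k,r} = {σ ∈ 𝒮^* : ℰ_r(σ) < c₁^k ≤ ℰ_r(σ^♭)}`. -/
def LamSet (p : ℕ → ℕ → ℝ) (χ : ℕ → ℝ) (sr : ℕ → ℕ → ℝ) (N : ℕ) (r c1 : ℝ) (k : ℕ) :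
    Set (List ℕ) :=
  {σ | isSword p N σ ∧ Er p χ sr N r σ < c1 ^ k ∧ c1 ^ k ≤ Er p χ sr N r σ.dropLast}

/-- `ℒ(σ) = {σ, σ⁺} ∪ {σ|_h ∗ (σ_{h+1}⁺, …, σ_n⁺) : 1 ≤ h ≤ n − 1}`. -/
def Lset (N : ℕ) (σ : List ℕ) : Finset (List ℕ) :=
  (Finset.range (σ.length + 1)).image fun h =>
    σ.take h ++ (σ.drop h).map (fun x => x + N)

/-! Split an admissible lift of `ω ∗ υ ∗ τ` as `a ∗ u ∗ b`. By (A3) no edge leads from the upper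
copy `{N+1,…,2N}` back to `Ψ`, so once a lift is in the upper copy it stays there. Hence `u` is
one of the `l + 1` words of `ℒ(υ)`, and `a ∗ b` is again admissible: since `ω ∗ τ ∈ 𝒮*`, (A3)
makes every lift of the junction `(ω_n, τ_1)` an edge except `(ω_n⁺, τ_1)`, which cannot occur.
Cutting out `u` trades `l + 1` transition factors `≤ p̄` for one factor `≥ p̲`, so summing over
the fibres of `a ∗ u ∗ b ↦ a ∗ b`, each of size at most `l + 1`, gives
`μ(J_{ω∗υ∗τ}) ≤ (l+1) p̄^{l+1} p̲⁻¹ μ(J_{ω∗τ})`. The same count for the contraction ratios gives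
`s_{ω∗υ∗τ} ≤ s̄^{l+1} s̲⁻¹ s_{ω∗τ}`. -/

lemma sum_le_card_mul_sum_of_fiber {ι κ R : Type*} [DecidableEq κ] [CommSemiring R]
    [PartialOrder R] [IsOrderedRing R] {s : Finset ι} {t : Finset κ} {φ : ι → κ}
    {f : ι → R} {g : κ → R} {k : ℕ} (hφ : ∀ x ∈ s, φ x ∈ t)
    (hk : ∀ y ∈ t, (s.filter fun x => φ x = y).card ≤ k) (hf : ∀ x ∈ s, f x ≤ g (φ x))
    (hg : ∀ y ∈ t, 0 ≤ g y) : ∑ x ∈ s, f x ≤ k * ∑ y ∈ t, g y := by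
  rw [← Finset.sum_fiberwise_of_maps_to hφ, Finset.mul_sum]
  refine Finset.sum_le_sum fun y hy => ?_
  calc ∑ x ∈ s with φ x = y, f x ≤ ∑ x ∈ s with φ x = y, g y :=
        Finset.sum_le_sum fun x hx =>
          (Finset.mem_filter.1 hx).2 ▸ hf x (Finset.mem_filter.1 hx).1
    _ = (s.filter fun x => φ x = y).card * g y := by rw [Finset.sum_const, nsmul_eq_mul]
    _ ≤ k * g y := mul_le_mul_of_nonneg_right (Nat.mono_cast (hk y hy)) (hg y hy)

lemma mul_rpow_le_mul_rpow_mul {μ₁ μ₂ s₁ s₂ A B r : ℝ} (hr : 0 ≤ r) (hμ₁ : 0 ≤ μ₁)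
    (hs₁ : 0 ≤ s₁) (hB : 0 ≤ B) (hs₂ : 0 ≤ s₂) (hμ : μ₁ ≤ A * μ₂) (hs : s₁ ≤ B * s₂) :
    μ₁ * s₁ ^ r ≤ A * B ^ r * (μ₂ * s₂ ^ r) :=
  calc μ₁ * s₁ ^ r ≤ A * μ₂ * (B * s₂) ^ r :=
        mul_le_mul hμ (Real.rpow_le_rpow hs₁ hs hr) (Real.rpow_nonneg hs₁ r) (hμ₁.trans hμ)
    _ = A * B ^ r * (μ₂ * s₂ ^ r) := by rw [Real.mul_rpow hB hs₂]; ring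

def excise {α : Type*} (n l : ℕ) (s : List α) : List α := s.take n ++ s.drop (n + l)

lemma excise_append_append {α : Type*} {a u b : List α} {n l : ℕ} (ha : a.length = n)
    (hu : u.length = l) : excise n l (a ++ u ++ b) = a ++ b := by
  subst ha hu
  simp [excise, List.drop_append]

lemma take_drop_append_append {α : Type*} {a u b : List α} {n l : ℕ} (ha : a.length = n)
    (hu : u.length = l) : ((a ++ u ++ b).drop n).take l = u := by
  subst ha hu
  simp

section Lifts

variable {N : ℕ}

lemma mem_lifts_nil {τ : List ℕ} : τ ∈ lifts N [] ↔ τ = [] := by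
  simp [lifts]

lemma mem_lifts_cons {i : ℕ} {σ τ : List ℕ} :
    τ ∈ lifts N (i :: σ) ↔ ∃ l ∈ lifts N σ, τ = i :: l ∨ τ = (i + N) :: l := by
  simp [lifts]

lemma length_of_mem_lifts {σ τ : List ℕ} (h : τ ∈ lifts N σ) : τ.length = σ.length := by
  induction σ generalizing τ with
  | nil => simp [mem_lifts_nil.1 h]
  | cons i σ ih =>
    obtain ⟨l, hl, rfl | rfl⟩ := mem_lifts_cons.1 h <;> simp [ih hl]

lemma ne_nil_of_mem_lifts {σ τ : List ℕ} (h : τ ∈ lifts N σ) (hσ : σ ≠ []) : τ ≠ [] :=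
  List.ne_nil_of_length_pos (by rw [length_of_mem_lifts h]; exact List.length_pos_iff.2 hσ)

lemma mem_lifts_append {σ σ' τ : List ℕ} :
    τ ∈ lifts N (σ ++ σ') ↔ ∃ a ∈ lifts N σ, ∃ b ∈ lifts N σ', τ = a ++ b := by
  induction σ generalizing τ with
  | nil => simp [mem_lifts_nil]
  | cons i σ ih =>
    simp only [List.cons_append, mem_lifts_cons, ih]
    constructor
    · rintro ⟨_, ⟨a, ha, b, hb, rfl⟩, rfl | rfl⟩
      exacts [⟨i :: a, ⟨a, ha, .inl rfl⟩, b, hb, rfl⟩,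
        ⟨(i + N) :: a, ⟨a, ha, .inr rfl⟩, b, hb, rfl⟩]
    · rintro ⟨_, ⟨a, ha, rfl | rfl⟩, b, hb, rfl⟩
      exacts [⟨a ++ b, ⟨a, ha, b, hb, rfl⟩, .inl rfl⟩, ⟨a ++ b, ⟨a, ha, b, hb, rfl⟩, .inr rfl⟩]

lemma head_of_mem_lifts {σ τ : List ℕ} (h : τ ∈ lifts N σ) (hσ : σ ≠ []) (hτ : τ ≠ []) :
    τ.head hτ = σ.head hσ ∨ τ.head hτ = σ.head hσ + N := by
  cases σ with
  | nil => exact absurd rfl hσ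
  | cons i σ => obtain ⟨l, -, rfl | rfl⟩ := mem_lifts_cons.1 h <;> simp

lemma getLast_of_mem_lifts {σ τ : List ℕ} (h : τ ∈ lifts N σ) (hσ : σ ≠ []) (hτ : τ ≠ []) :
    τ.getLast hτ = σ.getLast hσ ∨ τ.getLast hτ = σ.getLast hσ + N := by
  rw [← List.dropLast_append_getLast hσ, mem_lifts_append] at h
  obtain ⟨a, -, b, hb, rfl⟩ := h
  obtain ⟨l, hl, rfl | rfl⟩ := mem_lifts_cons.1 hb <;> simp [mem_lifts_nil.1 hl]

lemma mem_Icc_of_mem_lifts {σ τ : List ℕ} (h : τ ∈ lifts N σ)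
    (hσ : ∀ x ∈ σ, x ∈ Finset.Icc 1 N) : ∀ y ∈ τ, y ∈ Finset.Icc 1 (2 * N) := by
  induction σ generalizing τ with
  | nil => simp [mem_lifts_nil.1 h]
  | cons i σ ih =>
    have hi := Finset.mem_Icc.1 (hσ i List.mem_cons_self)
    have hσ' : ∀ x ∈ σ, x ∈ Finset.Icc 1 N := fun x hx => hσ x (List.mem_cons_of_mem _ hx)
    obtain ⟨l, hl, rfl | rfl⟩ := mem_lifts_cons.1 h <;>
      simpa [Finset.mem_Icc, show i ≤ 2 * N by omega, show i + N ≤ 2 * N by omega, hi.1,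
        show 1 ≤ i + N by omega] using ih hl hσ'

lemma eq_map_of_mem_lifts_of_forall_lt {σ τ : List ℕ} (h : τ ∈ lifts N σ)
    (hσ : ∀ x ∈ σ, x ≤ N) (hτ : ∀ y ∈ τ, N < y) : τ = σ.map (· + N) := by
  induction σ generalizing τ with
  | nil => simp [mem_lifts_nil.1 h]
  | cons i σ ih =>
    obtain ⟨l, hl, rfl | rfl⟩ := mem_lifts_cons.1 h
    · exact absurd (hσ i List.mem_cons_self) (hτ i List.mem_cons_self).not_ge
    · simp only [List.map_cons, List.cons.injEq, true_and]
      exact ih hl (fun x hx => hσ x (List.mem_cons_of_mem _ hx))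
        (fun y hy => hτ y (List.mem_cons_of_mem _ hy))

lemma mem_Lset_of_mem_lifts {σ τ : List ℕ} (h : τ ∈ lifts N σ)
    (hσ : ∀ x ∈ σ, x ∈ Finset.Icc 1 N) (hτ : τ.Pairwise fun x y => N < x → N < y) :
    τ ∈ Lset N σ := by
  induction σ generalizing τ with
  | nil => simp [mem_lifts_nil.1 h, Lset]
  | cons i σ ih =>
    have hi := Finset.mem_Icc.1 (hσ i List.mem_cons_self)
    have hσ' : ∀ x ∈ σ, x ∈ Finset.Icc 1 N := fun x hx => hσ x (List.mem_cons_of_mem _ hx)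
    obtain ⟨l, hl, rfl | rfl⟩ := mem_lifts_cons.1 h
    · obtain ⟨k, hk, rfl⟩ := Finset.mem_image.1 (ih hl hσ' (List.pairwise_cons.1 hτ).2)
      exact Finset.mem_image.2 ⟨k + 1, by simpa using hk, rfl⟩
    · have hup : ∀ y ∈ l, N < y := fun y hy => (List.pairwise_cons.1 hτ).1 y hy (by omega)
      refine Finset.mem_image.2 ⟨0, by simp, ?_⟩
      simp [eq_map_of_mem_lifts_of_forall_lt hl (fun x hx => (Finset.mem_Icc.1 (hσ' x hx)).2)
        hup]

lemma card_Lset_le (σ : List ℕ) : (Lset N σ).card ≤ σ.length + 1 :=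
  Finset.card_image_le.trans (Finset.card_range _).le

end Lifts

section WordProducts

variable {g : ℕ → ℕ → ℝ}

lemma sword_eq_pword : ∀ l : List ℕ, sword g l = pword g l
  | [] => rfl
  | [_] => rfl
  | a :: b :: t => by rw [sword, pword, sword_eq_pword (b :: t)]

lemma pword_nonneg : ∀ {l : List ℕ}, l.IsChain (fun x y => 0 ≤ g x y) → 0 ≤ pword g l
  | [], _ | [_], _ => zero_le_one
  | _ :: b :: t, h => mul_nonneg h.rel (pword_nonneg (l := b :: t) h.tail)

lemma pword_le_pow {M : ℝ} :
    ∀ {l : List ℕ}, l.IsChain (fun x y => 0 ≤ g x y ∧ g x y ≤ M) →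
      pword g l ≤ M ^ (l.length - 1)
  | [], _ | [_], _ => le_rfl
  | _ :: b :: t, h => by
    have ih := pword_le_pow (l := b :: t) h.tail
    calc pword g (_ :: b :: t) ≤ M * M ^ ((b :: t).length - 1) :=
          mul_le_mul h.rel.2 ih (pword_nonneg (h.tail.imp fun _ _ h => h.1))
            (h.rel.1.trans h.rel.2)
      _ = M ^ ((_ :: b :: t).length - 1) := by simp [pow_succ, mul_comm]

lemma pword_append_cons (x : ℕ) (r : List ℕ) :
    ∀ l : List ℕ, pword g (l ++ x :: r) = pword g (l ++ [x]) * pword g (x :: r)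
  | [] => by simp [pword]
  | [a] => by simp [pword]
  | a :: b :: l => by
    simp only [List.cons_append, pword]
    rw [← List.cons_append, pword_append_cons x r (b :: l), List.cons_append, mul_assoc]

lemma pword_append_append_le {m M : ℝ} {a u b : List ℕ} (ha : a ≠ []) (hb : b ≠ [])
    (hm : 0 < m) (hab : m ≤ g (a.getLast ha) (b.head hb))
    (h : (a ++ u ++ b).IsChain fun x y => 0 ≤ g x y ∧ g x y ≤ M) :
    pword g (a ++ u ++ b) ≤ M ^ (u.length + 1) * m⁻¹ * pword g (a ++ b) := by
  obtain ⟨a, x, rfl⟩ := (List.eq_nil_or_concat' a).resolve_left ha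
  obtain ⟨y, b, rfl⟩ := List.exists_cons_of_ne_nil hb
  simp only [List.getLast_append_singleton, List.head_cons] at hab
  have hsplit : pword g (a ++ [x] ++ u ++ y :: b) =
      pword g (a ++ [x]) * pword g (x :: u ++ [y]) * pword g (y :: b) := by
    rw [List.append_assoc, List.append_assoc, List.singleton_append, pword_append_cons,
      ← List.cons_append, pword_append_cons y b (x :: u), mul_assoc]
  have hsplit' :
      pword g (a ++ [x] ++ y :: b) = pword g (a ++ [x]) * g x y * pword g (y :: b) := by
    rw [List.append_assoc, List.singleton_append, pword_append_cons]
    simp [pword, mul_assoc]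
  have hmid : (x :: u ++ [y]).IsChain fun x y => 0 ≤ g x y ∧ g x y ≤ M :=
    h.infix ⟨a, b, by simp⟩
  have hA : 0 ≤ pword g (a ++ [x]) :=
    pword_nonneg ((h.infix ⟨[], u ++ y :: b, by simp⟩).imp fun _ _ h => h.1)
  have hB : 0 ≤ pword g (y :: b) :=
    pword_nonneg ((h.infix ⟨a ++ x :: u, [], by simp⟩).imp fun _ _ h => h.1)
  calc pword g (a ++ [x] ++ u ++ y :: b)
      ≤ pword g (a ++ [x]) * M ^ (u.length + 1) * pword g (y :: b) := by
        rw [hsplit]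
        gcongr
        simpa using pword_le_pow hmid
    _ = M ^ (u.length + 1) * m⁻¹ * (pword g (a ++ [x]) * m * pword g (y :: b)) := by
        field_simp
    _ ≤ M ^ (u.length + 1) * m⁻¹ * pword g (a ++ [x] ++ y :: b) := by
        have hM : 0 ≤ M := by
          obtain ⟨h0, hle⟩ := hmid.rel_getLast_head_of_append (l₁ := [x]) (l₂ := u ++ [y])
            (by simp) (by simp)
          exact h0.trans hle
        rw [hsplit']
        exact mul_le_mul_of_nonneg_left (by gcongr)
          (mul_nonneg (pow_nonneg hM _) (inv_nonneg.2 hm.le))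

end WordProducts

section Extremes

lemma finite_setOf_exists_mem_finset (S T : Finset ℕ) (P : ℕ → ℕ → Prop) (f : ℕ → ℕ → ℝ) :
    {x | ∃ i ∈ S, ∃ j ∈ T, P i j ∧ x = f i j}.Finite :=
  ((S ×ˢ T).image fun ij => f ij.1 ij.2).finite_toSet.subset <| by
    rintro _ ⟨i, hi, j, hj, -, rfl⟩
    exact Finset.mem_image.2 ⟨(i, j), Finset.mem_product.2 ⟨hi, hj⟩, rfl⟩

variable {p sr : ℕ → ℕ → ℝ} {N i j : ℕ}

lemma pMin_le (hi : i ∈ Finset.Icc 1 (2 * N)) (hj : j ∈ Finset.Icc 1 (2 * N))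
    (h : 0 < p i j) : pMin p N ≤ p i j :=
  csInf_le (finite_setOf_exists_mem_finset _ _ _ _).bddBelow ⟨i, hi, j, hj, h, rfl⟩

lemma le_pMax (hi : i ∈ Finset.Icc 1 (2 * N)) (hj : j ∈ Finset.Icc 1 (2 * N))
    (h : 0 < p i j) : p i j ≤ pMax p N :=
  le_csSup (finite_setOf_exists_mem_finset _ _ _ _).bddAbove ⟨i, hi, j, hj, h, rfl⟩

lemma pMin_nonneg : 0 ≤ pMin p N :=
  Real.sInf_nonneg (by rintro _ ⟨_, -, _, -, h, rfl⟩; exact h.le)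

lemma pMax_nonneg : 0 ≤ pMax p N :=
  Real.sSup_nonneg (by rintro _ ⟨_, -, _, -, h, rfl⟩; exact h.le)

lemma pMin_pos (hi : i ∈ Finset.Icc 1 (2 * N)) (hj : j ∈ Finset.Icc 1 (2 * N))
    (h : 0 < p i j) : 0 < pMin p N := by
  obtain ⟨_, -, _, -, hpos, heq⟩ := Set.Nonempty.csInf_mem
    (by exact ⟨_, i, hi, j, hj, h, rfl⟩)
    (finite_setOf_exists_mem_finset _ _ (fun i j => 0 < p i j) p)
  rw [pMin, heq]
  exact hpos

lemma sMin_le (h : isSword p N [i, j]) : sMin p sr N ≤ sr i j :=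
  csInf_le (finite_setOf_exists_mem_finset _ _ _ _).bddBelow
    ⟨i, h.1.2 i (by simp), j, h.1.2 j (by simp), h, rfl⟩

lemma le_sMax (h : isSword p N [i, j]) : sr i j ≤ sMax p sr N :=
  le_csSup (finite_setOf_exists_mem_finset _ _ _ _).bddAbove
    ⟨i, h.1.2 i (by simp), j, h.1.2 j (by simp), h, rfl⟩

lemma sMin_pos (hsr : ∀ i j, isSword p N [i, j] → 0 < sr i j) (h : isSword p N [i, j]) :
    0 < sMin p sr N := by
  obtain ⟨_, -, _, -, hs, heq⟩ := Set.Nonempty.csInf_mem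
    (by exact ⟨_, i, h.1.2 i (by simp), j, h.1.2 j (by simp), h, rfl⟩)
    (finite_setOf_exists_mem_finset _ _ (fun i j => isSword p N [i, j]) sr)
  rw [sMin, heq]
  exact hsr _ _ hs

end Extremes

section Admissible

variable {p : ℕ → ℕ → ℝ} {N : ℕ}

lemma mem_Gam {σ τ : List ℕ} : τ ∈ Gam p N σ ↔ τ ∈ lifts N σ ∧ τ.IsChain (edge p) :=
  Finset.mem_filter

lemma isSword_cons_cons {x y : ℕ} {t : List ℕ} (h : isSword p N (x :: y :: t)) :
    isSword p N [x, y] ∧ isSword p N (y :: t) := by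
  obtain ⟨⟨-, hσ⟩, τ, hτ⟩ := h
  obtain ⟨hlift, hchain⟩ := mem_Gam.1 hτ
  obtain ⟨l, hl, hx⟩ := mem_lifts_cons.1 hlift
  obtain ⟨l', hl', hy⟩ := mem_lifts_cons.1 hl
  obtain ⟨x', rfl, hx'⟩ : ∃ x', τ = x' :: l ∧ (x' = x ∨ x' = x + N) := by
    rcases hx with rfl | rfl <;> simp
  obtain ⟨y', rfl, hy'⟩ : ∃ y', l = y' :: l' ∧ (y' = y ∨ y' = y + N) := by
    rcases hy with rfl | rfl <;> simp
  refine ⟨⟨⟨by simp, by simp_all⟩, [x', y'], mem_Gam.2 ⟨?_, ?_⟩⟩,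
    ⟨⟨by simp, by simp_all⟩, y' :: l', mem_Gam.2 ⟨hl, hchain.tail⟩⟩⟩
  · simp only [mem_lifts_cons, mem_lifts_nil]
    exact ⟨[y'], ⟨[], rfl, by tauto⟩, by tauto⟩
  · exact List.isChain_pair.2 hchain.rel

lemma isSword.isChain_pair :
    ∀ {σ : List ℕ}, isSword p N σ → σ.IsChain fun x y => isSword p N [x, y]
  | [], _ => .nil
  | [_], _ => .singleton _
  | _ :: _ :: _, h => (isSword_cons_cons h).2.isChain_pair.cons_cons (isSword_cons_cons h).1

end Admissible

section UpperCopy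

variable {p : ℕ → ℕ → ℝ} {N : ℕ}

lemma A3.pos_of_isSword (hA3 : A3 p N) {i j : ℕ} (h : isSword p N [i, j]) :
    0 < p i j ∧ 0 < p i (j + N) ∧ 0 < p (i + N) (j + N) := by
  obtain ⟨⟨-, hij⟩, τ, hτ⟩ := h
  obtain ⟨hlift, hchain⟩ := mem_Gam.1 hτ
  rcases hA3 i (hij i (by simp)) j (hij j (by simp)) with h0 | ⟨h1, h2, -, h4⟩
  · simp only [mem_lifts_cons, mem_lifts_nil] at hlift
    obtain ⟨_, ⟨_, rfl, rfl | rfl⟩, rfl | rfl⟩ := hlift <;>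
      simp [edge, h0] at hchain
  · exact ⟨h1, h2, h4⟩

lemma A3.lt_of_edge (hA3 : A3 p N) {x y : ℕ} (hx : x ≤ 2 * N) (hy : 1 ≤ y)
    (he : edge p x y) (hxN : N < x) : N < y := by
  by_contra! hyN
  have hzero : p (x - N + N) y = 0 := by
    rcases hA3 (x - N) (Finset.mem_Icc.2 ⟨by omega, by omega⟩) y
      (Finset.mem_Icc.2 ⟨hy, hyN⟩) with h | h <;> exact h.2.2.1
  rw [Nat.sub_add_cancel hxN.le] at hzero
  exact ne_of_gt he hzero

lemma A3.pairwise_of_mem_Gam (hA3 : A3 p N) {σ s : List ℕ}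
    (hσ : ∀ x ∈ σ, x ∈ Finset.Icc 1 N) (hs : s ∈ Gam p N σ) :
    s.Pairwise fun x y => N < x → N < y := by
  obtain ⟨hlift, hchain⟩ := mem_Gam.1 hs
  have hmem := mem_Icc_of_mem_lifts hlift hσ
  have : Trans (fun x y : ℕ => N < x → N < y) (fun x y => N < x → N < y)
      (fun x y => N < x → N < y) := ⟨fun h₁ h₂ hx => h₂ (h₁ hx)⟩
  exact (hchain.imp_of_mem_imp fun x y hx hy he => hA3.lt_of_edge
    (Finset.mem_Icc.1 (hmem x hx)).2 (Finset.mem_Icc.1 (hmem y hy)).1 he).pairwise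

lemma A3.isChain_append (hA3 : A3 p N) {ω τ a b : List ℕ} (hωτ : isSword p N (ω ++ τ))
    (hω : ω ≠ []) (hτ : τ ≠ []) (ha : a ∈ lifts N ω) (hb : b ∈ lifts N τ)
    (ha' : a.IsChain (edge p)) (hb' : b.IsChain (edge p))
    (hup : ∀ x ∈ a, ∀ y ∈ b, N < x → N < y) : (a ++ b).IsChain (edge p) := by
  have hane := ne_nil_of_mem_lifts ha hω
  have hbne := ne_nil_of_mem_lifts hb hτ
  have hij := hA3.pos_of_isSword (hωτ.isChain_pair.rel_getLast_head_of_append hω hτ)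
  have hi := Finset.mem_Icc.1 (hωτ.1.2 _ (List.mem_append_left _ (List.getLast_mem hω)))
  have hj := Finset.mem_Icc.1 (hωτ.1.2 _ (List.mem_append_right _ (List.head_mem hτ)))
  refine ha'.append hb' ?_
  simp only [List.getLast?_eq_some_getLast hane, List.head?_eq_some_head hbne, Option.mem_def,
    Option.some.injEq]
  rintro _ rfl _ rfl
  rcases getLast_of_mem_lifts ha hω hane with hx | hx <;>
    rcases head_of_mem_lifts hb hτ hbne with hy | hy <;> rw [hx, hy]
  exacts [hij.1, hij.2.1,
    absurd (hup _ (List.getLast_mem hane) _ (List.head_mem hbne) (by omega)) (by omega),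
    hij.2.2]

end UpperCopy

section Comparison

variable {p sr : ℕ → ℕ → ℝ} {N : ℕ} {ω υ τ : List ℕ}

lemma A3.exists_decomp_of_mem_Gam (hA3 : A3 p N) (hω : isPsiWord N ω) (hυ : isPsiWord N υ)
    (hτ : isPsiWord N τ) (hωτ : isSword p N (ω ++ τ)) {s : List ℕ}
    (hs : s ∈ Gam p N (ω ++ υ ++ τ)) :
    ∃ a u b, s = a ++ u ++ b ∧ a.length = ω.length ∧ u.length = υ.length ∧ a ≠ [] ∧
      a ++ b ∈ Gam p N (ω ++ τ) ∧ u ∈ Lset N υ ∧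
      pword p s ≤ pMax p N ^ (υ.length + 1) * (pMin p N)⁻¹ * pword p (a ++ b) := by
  have hmem : ∀ x ∈ ω ++ υ ++ τ, x ∈ Finset.Icc 1 N := by
    simp only [List.mem_append]
    rintro x ((hx | hx) | hx)
    exacts [hω.2 x hx, hυ.2 x hx, hτ.2 x hx]
  have hup := hA3.pairwise_of_mem_Gam hmem hs
  obtain ⟨hlift, hchain⟩ := mem_Gam.1 hs
  have hsmem := mem_Icc_of_mem_lifts hlift hmem
  obtain ⟨au, hau, b, hb, rfl⟩ := mem_lifts_append.1 hlift
  obtain ⟨a, ha, u, hu, rfl⟩ := mem_lifts_append.1 hau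
  have hane := ne_nil_of_mem_lifts ha hω.1
  have hbne := ne_nil_of_mem_lifts hb hτ.1
  have hab : (a ++ b).IsChain (edge p) :=
    hA3.isChain_append hωτ hω.1 hτ.1 ha hb (hchain.infix ⟨[], u ++ b, by simp⟩)
      (hchain.infix ⟨a ++ u, [], by simp⟩)
      (fun x hx y hy => (List.pairwise_append.1 hup).2.2 x (by simp [hx]) y hy)
  refine ⟨a, u, b, rfl, length_of_mem_lifts ha, length_of_mem_lifts hu, hane,
    mem_Gam.2 ⟨mem_lifts_append.2 ⟨a, ha, b, hb, rfl⟩, hab⟩,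
    mem_Lset_of_mem_lifts hu hυ.2 (hup.sublist ?_), ?_⟩
  · exact (List.sublist_append_right a u).trans (List.sublist_append_left _ b)
  · have hjunc := hab.rel_getLast_head_of_append hane hbne
    have hx := hsmem _
      (List.mem_append_left _ (List.mem_append_left _ (List.getLast_mem hane)))
    have hy := hsmem _ (List.mem_append_right _ (List.head_mem hbne))
    rw [← length_of_mem_lifts hu]
    refine pword_append_append_le hane hbne (pMin_pos hx hy hjunc) (pMin_le hx hy hjunc) ?_
    exact hchain.imp_of_mem_imp fun x y hx hy he =>
      ⟨le_of_lt he, le_pMax (hsmem x hx) (hsmem y hy) he⟩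

lemma weight_nonneg_of_mem_Gam {χ : ℕ → ℝ} (hχ : ∀ i ∈ Finset.Icc 1 (2 * N), 0 < χ i)
    {σ ρ : List ℕ} (hσ : isPsiWord N σ) (hρ : ρ ∈ Gam p N σ) :
    0 ≤ χ (ρ.headD 0) * pword p ρ := by
  obtain ⟨hlift, hchain⟩ := mem_Gam.1 hρ
  obtain ⟨x, ρ, rfl⟩ := List.exists_cons_of_ne_nil (ne_nil_of_mem_lifts hlift hσ.1)
  exact mul_nonneg (hχ x (mem_Icc_of_mem_lifts hlift hσ.2 x List.mem_cons_self)).le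
    (pword_nonneg (hchain.imp fun _ _ h => h.le))

lemma muJ_nonneg {χ : ℕ → ℝ} (hχ : ∀ i ∈ Finset.Icc 1 (2 * N), 0 < χ i) {σ : List ℕ}
    (hσ : isPsiWord N σ) : 0 ≤ muJ p χ N σ :=
  Finset.sum_nonneg fun _ hρ => weight_nonneg_of_mem_Gam hχ hσ hρ

lemma A3.card_filter_excise_le (hA3 : A3 p N) (hω : isPsiWord N ω) (hυ : isPsiWord N υ)
    (hτ : isPsiWord N τ) (hωτ : isSword p N (ω ++ τ)) (ρ : List ℕ) :
    ((Gam p N (ω ++ υ ++ τ)).filter fun s => excise ω.length υ.length s = ρ).card ≤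
      υ.length + 1 := by
  have hdecomp := fun s (hs : s ∈ Gam p N (ω ++ υ ++ τ)) =>
    hA3.exists_decomp_of_mem_Gam hω hυ hτ hωτ hs
  refine (Finset.card_le_card_of_injOn (fun s => (s.drop ω.length).take υ.length) ?_ ?_).trans
    (card_Lset_le (N := N) υ)
  · intro s hs
    obtain ⟨a, u, b, rfl, hla, hlu, -, -, hu, -⟩ := hdecomp s (Finset.mem_filter.1 hs).1
    simpa only [Finset.mem_coe, take_drop_append_append hla hlu] using hu
  · intro s₁ hs₁ s₂ hs₂ hmid
    obtain ⟨hmem₁, rfl⟩ := Finset.mem_filter.1 (Finset.mem_coe.1 hs₁)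
    obtain ⟨hmem₂, hexc⟩ := Finset.mem_filter.1 (Finset.mem_coe.1 hs₂)
    obtain ⟨a₁, u₁, b₁, rfl, hla₁, hlu₁, -⟩ := hdecomp _ hmem₁
    obtain ⟨a₂, u₂, b₂, rfl, hla₂, hlu₂, -⟩ := hdecomp _ hmem₂
    rw [excise_append_append hla₁ hlu₁, excise_append_append hla₂ hlu₂] at hexc
    simp only [take_drop_append_append hla₁ hlu₁, take_drop_append_append hla₂ hlu₂] at hmid
    obtain ⟨rfl, rfl⟩ := List.append_inj hexc (hla₂.trans hla₁.symm)
    rw [hmid]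

lemma A3.muJ_append_append_le (hA3 : A3 p N) {χ : ℕ → ℝ}
    (hχ : ∀ i ∈ Finset.Icc 1 (2 * N), 0 < χ i) (hω : isPsiWord N ω) (hυ : isPsiWord N υ)
    (hτ : isPsiWord N τ) (hωτ : isSword p N (ω ++ τ)) :
    muJ p χ N (ω ++ υ ++ τ) ≤
      (υ.length + 1) * (pMax p N ^ (υ.length + 1) * (pMin p N)⁻¹) * muJ p χ N (ω ++ τ) := by
  set C := pMax p N ^ (υ.length + 1) * (pMin p N)⁻¹
  have hC : 0 ≤ C := mul_nonneg (pow_nonneg pMax_nonneg _) (inv_nonneg.2 pMin_nonneg)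
  have hmaps :
      ∀ s ∈ Gam p N (ω ++ υ ++ τ), excise ω.length υ.length s ∈ Gam p N (ω ++ τ) := by
    intro s hs
    obtain ⟨a, u, b, rfl, hla, hlu, -, hab, -⟩ :=
      hA3.exists_decomp_of_mem_Gam hω hυ hτ hωτ hs
    rwa [excise_append_append hla hlu]
  have hterm : ∀ s ∈ Gam p N (ω ++ υ ++ τ), χ (s.headD 0) * pword p s ≤
      C * (χ ((excise ω.length υ.length s).headD 0) * pword p (excise ω.length υ.length s)) := by
    intro s hs
    obtain ⟨a, u, b, rfl, hla, hlu, hane, hab, -, hpw⟩ :=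
      hA3.exists_decomp_of_mem_Gam hω hυ hτ hωτ hs
    rw [excise_append_append hla hlu]
    obtain ⟨x, a, rfl⟩ := List.exists_cons_of_ne_nil hane
    have hx : 0 ≤ χ x :=
      (hχ x (mem_Icc_of_mem_lifts (mem_Gam.1 hab).1 hωτ.1.2 x (by simp))).le
    calc χ ((x :: a ++ u ++ b).headD 0) * pword p (x :: a ++ u ++ b)
        ≤ χ x * (C * pword p (x :: a ++ b)) := by simpa using mul_le_mul_of_nonneg_left hpw hx
      _ = C * (χ ((x :: a ++ b).headD 0) * pword p (x :: a ++ b)) := by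
        simp only [List.cons_append, List.headD_cons]; ring
  calc muJ p χ N (ω ++ υ ++ τ)
      ≤ ((υ.length + 1 : ℕ) : ℝ) * ∑ ρ ∈ Gam p N (ω ++ τ), C * (χ (ρ.headD 0) * pword p ρ) :=
        sum_le_card_mul_sum_of_fiber hmaps
          (fun ρ _ => hA3.card_filter_excise_le hω hυ hτ hωτ ρ) hterm
          (fun ρ hρ => mul_nonneg hC (weight_nonneg_of_mem_Gam hχ hωτ.1 hρ))
    _ = _ := by rw [muJ, ← Finset.mul_sum]; push_cast; ring

lemma sword_nonneg (hsr : ∀ i j, isSword p N [i, j] → 0 < sr i j) {σ : List ℕ}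
    (hσ : isSword p N σ) : 0 ≤ sword sr σ := by
  rw [sword_eq_pword]
  exact pword_nonneg (hσ.isChain_pair.imp fun x y h => (hsr x y h).le)

lemma sword_append_append_le (hsr : ∀ i j, isSword p N [i, j] → 0 < sr i j)
    (hω : ω ≠ []) (hτ : τ ≠ []) (hωτ : isSword p N (ω ++ τ))
    (hωυτ : isSword p N (ω ++ υ ++ τ)) :
    sword sr (ω ++ υ ++ τ) ≤
      sMax p sr N ^ (υ.length + 1) * (sMin p sr N)⁻¹ * sword sr (ω ++ τ) := by
  have hjunc := hωτ.isChain_pair.rel_getLast_head_of_append hω hτ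
  rw [sword_eq_pword, sword_eq_pword]
  exact pword_append_append_le hω hτ (sMin_pos hsr hjunc) (sMin_le hjunc)
    (hωυτ.isChain_pair.imp fun x y h => ⟨(hsr x y h).le, le_sMax h⟩)

end Comparison

theorem stmt16_general
    (N q : ℕ) (r : ℝ) (hr : 0 < r)
    (p : ℕ → ℕ → ℝ) (χ : ℕ → ℝ)
    (hχpos : ∀ i ∈ Finset.Icc 1 (2 * N), 0 < χ i)
    (sr : ℕ → ℕ → ℝ)
    (T : ℕ → ℕ → EuclideanSpace ℝ (Fin q) → EuclideanSpace ℝ (Fin q))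
    (hsim : ∀ i ∈ Finset.Icc 1 N, ∀ j ∈ Finset.Icc 1 N, isSword p N [i, j] →
      0 < sr i j ∧ sr i j < 1 ∧ ∀ x y, dist (T i j x) (T i j y) = sr i j * dist x y)
    (hA3 : A3 p N)
    (ω τ υ : List ℕ)
    (hω : isH1word p N ω) (hτ : isH1word p N τ) (hυ : isH1word p N υ)
    (h1 : isSword p N (ω ++ τ)) (h2 : isSword p N (ω ++ υ ++ τ)) :
    Er p χ sr N r (ω ++ υ ++ τ) ≤
      (υ.length + 1 : ℝ) * (pMax p N * sMax p sr N ^ r) ^ (υ.length + 1) *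
        (pMin p N * sMin p sr N ^ r)⁻¹ * Er p χ sr N r (ω ++ τ) := by
  have hsr : ∀ i j, isSword p N [i, j] → 0 < sr i j := fun i j h =>
    (hsim i (h.1.2 i (by simp)) j (h.1.2 j (by simp)) h).1
  have hjunc := h1.isChain_pair.rel_getLast_head_of_append hω.1 hτ.1
  have hsMin := sMin_pos hsr hjunc
  have hsMax : 0 ≤ sMax p sr N := hsMin.le.trans ((sMin_le hjunc).trans (le_sMax hjunc))
  have hμ :=
    hA3.muJ_append_append_le hχpos ⟨hω.1, hω.2.1⟩ ⟨hυ.1, hυ.2.1⟩ ⟨hτ.1, hτ.2.1⟩ h1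
  have hs := sword_append_append_le hsr hω.1 hτ.1 h1 h2
  have hB : 0 ≤ sMax p sr N ^ (υ.length + 1) * (sMin p sr N)⁻¹ :=
    mul_nonneg (pow_nonneg hsMax _) (inv_nonneg.2 hsMin.le)
  rw [Er, Er, if_neg (by simp [hω.1]), if_neg (by simp [hω.1])]
  calc _ ≤ _ := mul_rpow_le_mul_rpow_mul hr.le (muJ_nonneg hχpos h2.1) (sword_nonneg hsr h2)
        hB (sword_nonneg hsr h1) hμ hs
    _ = _ := by
      rw [Real.mul_rpow (pow_nonneg hsMax _) (inv_nonneg.2 hsMin.le), Real.inv_rpow hsMin.le,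
        ← Real.rpow_pow_comm hsMax, mul_pow, mul_inv]
      ring

/-- **Lemma 4.2.** Assume (A1)–(A3). Let `ω ∈ H_{1,n}`, `τ ∈ H_{1,m}`, `υ ∈ H_{1,l}` with
`ω∗τ, ω∗υ∗τ ∈ 𝒮^*`. Then
`ℰ_r(ω∗υ∗τ) ≤ (l+1)(p̄ s̄^r)^{l+1} (p̲ s̲^r)⁻¹ ℰ_r(ω∗τ)`. -/
theorem stmt16
    (N q : ℕ) (hN : 2 ≤ N) (hq : 1 ≤ q) (r : ℝ) (hr : 0 < r)
    (p : ℕ → ℕ → ℝ) (χ : ℕ → ℝ)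
    (hp0 : ∀ i j, 0 ≤ p i j)
    (hpsupp : ∀ i j, 0 < p i j → i ∈ Finset.Icc 1 (2 * N) ∧ j ∈ Finset.Icc 1 (2 * N))
    (hpsum : ∀ i ∈ Finset.Icc 1 (2 * N), ∑ j ∈ Finset.Icc 1 (2 * N), p i j = 1)
    (hχpos : ∀ i ∈ Finset.Icc 1 (2 * N), 0 < χ i)
    (hχsum : ∑ i ∈ Finset.Icc 1 (2 * N), χ i = 1)
    (sr : ℕ → ℕ → ℝ)
    (T : ℕ → ℕ → EuclideanSpace ℝ (Fin q) → EuclideanSpace ℝ (Fin q))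
    (J : ℕ → Set (EuclideanSpace ℝ (Fin q)))
    (hTinv : ∀ i ∈ Finset.Icc 1 N, ∀ j ∈ Finset.Icc 1 N, ∀ a b : ℕ,
      (a = i ∨ a = i + N) → (b = j ∨ b = j + N) → 0 < p a b →
      T a b = T i j ∧ sr a b = sr i j)
    (hsim : ∀ i ∈ Finset.Icc 1 N, ∀ j ∈ Finset.Icc 1 N, isSword p N [i, j] →
      0 < sr i j ∧ sr i j < 1 ∧ ∀ x y, dist (T i j x) (T i j y) = sr i j * dist x y)
    (hJcpt : ∀ i ∈ Finset.Icc 1 N,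
      IsCompact (J i) ∧ (J i).Nonempty ∧ closure (interior (J i)) = J i ∧
        Metric.diam (J i) = 1)
    (hJdisj : ∀ i ∈ Finset.Icc 1 N, ∀ j ∈ Finset.Icc 1 N, i ≠ j → Disjoint (J i) (J j))
    (hJplus : ∀ i ∈ Finset.Icc 1 N, J (i + N) = J i)
    (hnest : ∀ i ∈ Finset.Icc 1 N, ∀ j ∈ Finset.Icc 1 N, isSword p N [i, j] →
      T i j '' J j ⊆ J i)
    (hTdisj : ∀ i ∈ Finset.Icc 1 N, ∀ j ∈ Finset.Icc 1 N, ∀ l ∈ Finset.Icc 1 N,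
      isSword p N [i, j] → isSword p N [i, l] → j ≠ l →
      Disjoint (T i j '' J j) (T i l '' J l))
    (hA1 : A1 p N) (hA2 : A2 p N) (hA3 : A3 p N)
    (ω τ υ : List ℕ)
    (hω : isH1word p N ω) (hτ : isH1word p N τ) (hυ : isH1word p N υ)
    (h1 : isSword p N (ω ++ τ)) (h2 : isSword p N (ω ++ υ ++ τ)) :
    Er p χ sr N r (ω ++ υ ++ τ) ≤
      (υ.length + 1 : ℝ) * (pMax p N * sMax p sr N ^ r) ^ (υ.length + 1) *
        (pMin p N * sMin p sr N ^ r)⁻¹ * Er p χ sr N r (ω ++ τ) :=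
  stmt16_general N q r hr p χ hχpos sr T hsim hA3 ω τ υ hω hτ hυ h1 h2

end MTM

end
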